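/- arXiv:2504.14926 — 2 statements merged into one kernel-verified Lean document; each statement's English description precedes it below -/
import Mathlib

section
/- Let (r : ℕ → ℝ) be a nonnegative sequence, and suppose there exist constants c ≥ 1 (an integer) and e ≥ 0 (a real) such that for all integers n > c and all positive integers m, r(m) ≤ ⌈m/(n-c)⌉ · (r(n) + e). Then the limit of r(m)/m as m → ∞ exists and is finite. -/
/-- If a nonnegative sequence `r` satisfies the recursive merging bound
`r(m) ≤ ⌈m/(n-c)⌉ (r(n) + e)` for all `n > c` and `m ≥ 1`, then
`r(m)/m` converges to a finite limit. -/
theorem limit_exists_of_merging_bound (r : ℕ → ℝ) (hr : ∀ m, 0 ≤ r m)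
    (c : ℕ) (hc : 1 ≤ c) (e : ℝ) (he : 0 ≤ e)
    (h : ∀ n : ℕ, c < n → ∀ m : ℕ, 0 < m →
      r m ≤ (⌈(m : ℝ) / ((n : ℝ) - (c : ℝ))⌉ : ℝ) * (r n + e)) :
    ∃ L : ℝ, Filter.Tendsto (fun m : ℕ => r m / m) Filter.atTop (nhds L) := by
  set S : Set ℝ := {x | ∃ n : ℕ, c < n ∧ x = (r n + e) / ((n : ℝ) - c)} with hS
  have hmem : ∀ n : ℕ, c < n → (r n + e) / ((n : ℝ) - c) ∈ S := fun n hn => ⟨n, hn, rfl⟩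
  have hSne : S.Nonempty := ⟨_, hmem (c + 1) (by omega)⟩
  have hpos : ∀ n : ℕ, c < n → (0 : ℝ) < (n : ℝ) - c := by
    intro n hn
    have : (c : ℝ) < n := by exact_mod_cast hn
    linarith
  have hSnn : ∀ x ∈ S, (0 : ℝ) ≤ x := by
    rintro x ⟨n, hn, rfl⟩
    exact div_nonneg (by linarith [hr n]) (le_of_lt (hpos n hn))
  have hSbdd : BddBelow S := ⟨0, fun x hx => hSnn x hx⟩
  set L := sInf S with hL
  have hL0 : 0 ≤ L := le_csInf hSne hSnn
  refine ⟨L, ?_⟩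
  rw [Metric.tendsto_atTop]
  intro ε hε
  have hε2 : 0 < ε / 2 := by linarith
  obtain ⟨x, hxS, hx⟩ := (csInf_lt_iff hSbdd hSne).mp (show L < L + ε / 2 by linarith)
  obtain ⟨n, hn, rfl⟩ := hxS
  obtain ⟨N1, hN1⟩ := exists_nat_gt ((r n + e) / (ε / 2))
  obtain ⟨N2, hN2⟩ := exists_nat_gt ((L * c + e) / ε)
  refine ⟨max (max N1 N2) (c + 1), fun m hm => ?_⟩
  have hmc : c < m := by
    have := le_trans (le_max_right (max N1 N2) (c + 1)) hm
    omega
  have hm0 : (0 : ℝ) < m := by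
    have : 0 < m := by omega
    exact_mod_cast this
  have hN1m : (N1 : ℝ) ≤ m := by
    have : N1 ≤ m := le_trans (le_trans (le_max_left _ _) (le_max_left _ _)) hm
    exact_mod_cast this
  have hN2m : (N2 : ℝ) ≤ m := by
    have : N2 ≤ m := le_trans (le_trans (le_max_right _ _) (le_max_left _ _)) hm
    exact_mod_cast this
  have hnc : (0 : ℝ) < (n : ℝ) - c := hpos n hn
  have hmc' : (0 : ℝ) < (m : ℝ) - c := hpos m hmc
  -- Upper bound: r m / m < L + ε
  have hup : r m / m < L + ε := by
    have h1 : r m ≤ ((m : ℝ) / ((n : ℝ) - c) + 1) * (r n + e) := by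
      refine le_trans (h n hn m (by omega)) ?_
      have hce : (⌈(m : ℝ) / ((n : ℝ) - (c : ℝ))⌉ : ℝ) ≤ (m : ℝ) / ((n : ℝ) - c) + 1 :=
        (Int.ceil_lt_add_one _).le
      exact mul_le_mul_of_nonneg_right hce (by linarith [hr n])
    have h2 : r m / m ≤ (r n + e) / ((n : ℝ) - c) + (r n + e) / m := by
      calc r m / m ≤ ((m : ℝ) / ((n : ℝ) - c) + 1) * (r n + e) / m := by gcongr
        _ = (r n + e) / ((n : ℝ) - c) + (r n + e) / m := by
            field_simp
    have h3 : (r n + e) / m < ε / 2 := by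
      rw [div_lt_iff₀ hm0]
      have : (r n + e) < (ε / 2) * N1 := by
        have := (div_lt_iff₀ hε2).mp hN1
        linarith
      nlinarith
    linarith
  -- Lower bound: L - ε < r m / m
  have hlow : L - ε < r m / m := by
    have h1 : L ≤ (r m + e) / ((m : ℝ) - c) := csInf_le hSbdd (hmem m hmc)
    have h2 : L * ((m : ℝ) - c) ≤ r m + e := (le_div_iff₀ hmc').mp h1
    have h3 : L * c + e < ε * m := by
      have := (div_lt_iff₀ hε).mp hN2
      nlinarith
    have h4 : (L - ε) * m < r m := by nlinarith
    rw [lt_div_iff₀ hm0]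
    nlinarith
  rw [Real.dist_eq, abs_lt]
  constructor <;> linarith
end

section
/- Let (r : ℕ → ℝ) be a nonnegative sequence and let a = liminf_{m→∞} r(m)/m be finite. Suppose there exist an integer c ≥ 1 and a real e ≥ 0 such that for all integers n > c and all positive integers m, r(m) ≤ ⌈m/(n-c)⌉ · (r(n) + e). Then limsup_{m→∞} r(m)/m = a, i.e., r(m)/m converges to its limit inferior. -/
/-- If a nonnegative sequence `r` satisfies the recursive merging bound and the
limit inferior `a` of `r(m)/m` is finite, then the limit superior also equals `a`. -/
theorem limsup_eq_liminf_of_merging_bound (r : ℕ → ℝ) (hr : ∀ m, 0 ≤ r m) (a : ℝ)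
    (ha : Filter.liminf (fun m : ℕ => ((r m / m : ℝ) : EReal)) Filter.atTop = (a : EReal))
    (c : ℕ) (hc : 1 ≤ c) (e : ℝ) (he : 0 ≤ e)
    (h : ∀ n : ℕ, c < n → ∀ m : ℕ, 0 < m →
      r m ≤ (⌈(m : ℝ) / ((n : ℝ) - (c : ℝ))⌉ : ℝ) * (r n + e)) :
    Filter.limsup (fun m : ℕ => ((r m / m : ℝ) : EReal)) Filter.atTop = (a : EReal) := by
  set f : ℕ → EReal := fun m : ℕ => ((r m / m : ℝ) : EReal) with hf
  -- a is nonnegative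
  have hA0 : (0 : ℝ) ≤ a := by
    have h0 : (0 : EReal) ≤ Filter.liminf f Filter.atTop :=
      Filter.le_liminf_of_le (by isBoundedDefault)
        (Filter.Eventually.of_forall (fun m => by
          have h' : (0 : ℝ) ≤ r m / m := div_nonneg (hr m) (Nat.cast_nonneg m)
          simp only [hf]
          exact_mod_cast h'))
    rw [ha] at h0
    exact_mod_cast h0
  have key : ∀ ε : ℝ, 0 < ε →
      Filter.limsup f Filter.atTop ≤ ((a + 3 * ε : ℝ) : EReal) := by
    intro ε hε
    obtain ⟨N0, hN0⟩ := exists_nat_gt ((e + (a + 2 * ε) * c) / ε)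
    have hfreq : ∃ᶠ n in Filter.atTop, f n < ((a + ε : ℝ) : EReal) :=
      Filter.frequently_lt_of_liminf_lt (by isBoundedDefault)
        (by rw [ha]; exact_mod_cast (by linarith : a < a + ε))
    obtain ⟨n, hfn, hnge⟩ :=
      (hfreq.and_eventually (Filter.eventually_ge_atTop (max (c + 1) N0))).exists
    have hcn : c < n := lt_of_lt_of_le (Nat.lt_succ_self c) (le_trans (le_max_left _ _) hnge)
    have hN0n : N0 ≤ n := le_trans (le_max_right _ _) hnge
    have hnpos : (0 : ℝ) < n := by
      have : 0 < n := lt_of_le_of_lt (Nat.zero_le c) hcn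
      exact_mod_cast this
    have hnc : (0 : ℝ) < (n : ℝ) - c := by
      have : (c : ℝ) < n := by exact_mod_cast hcn
      linarith
    simp only [hf] at hfn
    have hrn : r n / n < a + ε := by exact_mod_cast hfn
    have hrn' : r n < (a + ε) * n := (div_lt_iff₀ hnpos).mp hrn
    -- first term bound
    have h1 : e + (a + 2 * ε) * c < ε * n := by
      have h2 : e + (a + 2 * ε) * c < ε * N0 := by
        have := (div_lt_iff₀ hε).mp hN0
        linarith [this]
      have h3 : (N0 : ℝ) ≤ n := by exact_mod_cast hN0n
      nlinarith
    have hT : (r n + e) / ((n : ℝ) - c) ≤ a + 2 * ε := by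
      rw [div_le_iff₀ hnc]
      nlinarith
    obtain ⟨M, hM⟩ := exists_nat_gt ((r n + e) / ε)
    have hrne : (0 : ℝ) ≤ r n + e := add_nonneg (hr n) he
    have hev : ∀ᶠ m in Filter.atTop, f m ≤ ((a + 3 * ε : ℝ) : EReal) := by
      filter_upwards [Filter.eventually_ge_atTop (max M 1)] with m hm
      have hm1 : 1 ≤ m := le_trans (le_max_right _ _) hm
      have hMm : M ≤ m := le_trans (le_max_left _ _) hm
      have hmpos : (0 : ℝ) < m := by exact_mod_cast hm1
      have hceil : ((⌈(m : ℝ) / ((n : ℝ) - c)⌉ : ℤ) : ℝ) ≤ (m : ℝ) / ((n : ℝ) - c) + 1 :=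
        le_of_lt (Int.ceil_lt_add_one _)
      have hrm : r m ≤ ((m : ℝ) / ((n : ℝ) - c) + 1) * (r n + e) := by
        calc r m ≤ ((⌈(m : ℝ) / ((n : ℝ) - c)⌉ : ℤ) : ℝ) * (r n + e) := h n hcn m hm1
          _ ≤ ((m : ℝ) / ((n : ℝ) - c) + 1) * (r n + e) :=
            mul_le_mul_of_nonneg_right hceil hrne
      have hbound : r m / m ≤ (r n + e) / ((n : ℝ) - c) + (r n + e) / m := by
        rw [div_le_iff₀ hmpos]
        have expand : ((r n + e) / ((n : ℝ) - c) + (r n + e) / (m : ℝ)) * m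
            = ((m : ℝ) / ((n : ℝ) - c) + 1) * (r n + e) := by
          field_simp
        rw [expand]
        exact hrm
      have hsecond : (r n + e) / m ≤ ε := by
        rw [div_le_iff₀ hmpos]
        have hMr : (M : ℝ) ≤ m := by exact_mod_cast hMm
        have := (div_lt_iff₀ hε).mp hM
        nlinarith
      have hfin : r m / m ≤ a + 3 * ε := by linarith
      simp only [hf]
      exact_mod_cast hfin
    exact Filter.limsup_le_of_le (by isBoundedDefault) hev
  apply le_antisymm
  · by_contra hcon
    push_neg at hcon
    obtain ⟨b, hab, hbl⟩ := EReal.lt_iff_exists_real_btwn.mp hcon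
    have hab' : a < b := by exact_mod_cast hab
    have hε : 0 < (b - a) / 3 := by linarith
    have := key ((b - a) / 3) hε
    have hb : a + 3 * ((b - a) / 3) = b := by ring
    rw [hb] at this
    exact absurd (lt_of_lt_of_le hbl this) (lt_irrefl _)
  · rw [← ha]
    exact Filter.liminf_le_limsup
end
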